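/- There exist constants c₁ > 0 and c₂ > 0, depending only on α, such that for every θ ∈ (0,π/4), every a > 0 and b > 0 with a² ≥ b, and every p = (x_p,y_p,z_p) ∈ ℍ¹ satisfying x_p > a, |z_p| < b, and |y_p| < x_p tan θ, one has c₁ x_p ≤ d_α(0,p) ≤ c₂ x_p. In fact one may take c₁ = 1/(α√2) and c₂ = √((2+√(4+4α²))/(2α²)). -/
import Mathlib


open Real

abbrev H : Type := ℝ × ℝ × ℝ

noncomputable section

/-- Heisenberg group law on ℝ³. -/
def hmul (p q : H) : H :=
  (p.1 + q.1, p.2.1 + q.2.1, p.2.2 + q.2.2 + (p.1 * q.2.1 - p.2.1 * q.1) / 2)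

/-- Heisenberg inverse. -/
def hinv (p : H) : H := (-p.1, -p.2.1, -p.2.2)

/-- Heisenberg dilation. -/
def hdil (l : ℝ) (p : H) : H := (l * p.1, l * p.2.1, l ^ 2 * p.2.2)

/-- Horizontal norm ρ. -/
def rho (p : H) : ℝ := Real.sqrt (p.1 ^ 2 + p.2.1 ^ 2)

/-- The explicit formula for d_α(0,p). -/
def dZ (α : ℝ) (p : H) : ℝ :=
  Real.sqrt (((rho p) ^ 2 + Real.sqrt ((rho p) ^ 4 + 4 * α ^ 2 * p.2.2 ^ 2)) / (2 * α ^ 2))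

set_option maxHeartbeats 1000000 in
theorem stmt8 (α : ℝ) (hα : 0 < α) :
    ∃ c₁ c₂ : ℝ, c₁ = 1 / (α * Real.sqrt 2) ∧
      c₂ = Real.sqrt ((2 + Real.sqrt (4 + 4 * α ^ 2)) / (2 * α ^ 2)) ∧
      0 < c₁ ∧ 0 < c₂ ∧
      ∀ θ : ℝ, 0 < θ → θ < π / 4 → ∀ a b : ℝ, 0 < a → 0 < b → b ≤ a ^ 2 →
        ∀ p : H, a < p.1 → |p.2.2| < b → |p.2.1| < p.1 * Real.tan θ →
          c₁ * p.1 ≤ dZ α p ∧ dZ α p ≤ c₂ * p.1 := by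
  have h2 : (0:ℝ) < 2 * α ^ 2 := by positivity
  have hargc2 : (0:ℝ) < (2 + Real.sqrt (4 + 4 * α ^ 2)) / (2 * α ^ 2) := by positivity
  refine ⟨1 / (α * Real.sqrt 2), Real.sqrt ((2 + Real.sqrt (4 + 4 * α ^ 2)) / (2 * α ^ 2)),
    rfl, rfl, by positivity, Real.sqrt_pos.mpr hargc2, ?_⟩
  intro θ hθ0 hθ a b ha hb hba p hax hz hy
  obtain ⟨x, y, z⟩ := p
  simp only [] at hax hz hy ⊢
  have hx : 0 < x := lt_trans ha hax
  have htan : Real.tan θ < 1 := by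
    have := Real.tan_lt_tan_of_nonneg_of_lt_pi_div_two hθ0.le (by linarith [Real.pi_pos]) hθ
    simpa [Real.tan_pi_div_four] using this
  have hy2 : y ^ 2 < x ^ 2 := by
    have h1 : |y| < x := lt_of_lt_of_le hy (by nlinarith)
    have h0 := abs_nonneg y
    nlinarith [sq_abs y]
  have hz2 : z ^ 2 < x ^ 4 := by
    have h1 : |z| < x ^ 2 := by nlinarith
    have h0 := abs_nonneg z
    nlinarith [sq_abs z]
  have hrho : (rho (x, y, z)) ^ 2 = x ^ 2 + y ^ 2 := Real.sq_sqrt (by positivity)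
  have hrho4 : (rho (x, y, z)) ^ 4 = (x ^ 2 + y ^ 2) ^ 2 := by
    have h : (rho (x, y, z)) ^ 4 = ((rho (x, y, z)) ^ 2) ^ 2 := by ring
    rw [h, hrho]
  have hsA : (0:ℝ) ≤ Real.sqrt ((rho (x, y, z)) ^ 4 + 4 * α ^ 2 * z ^ 2) := Real.sqrt_nonneg _
  constructor
  · -- lower bound
    have hc1x : (1 / (α * Real.sqrt 2) * x) ^ 2 = x ^ 2 / (2 * α ^ 2) := by
      have h2s : Real.sqrt 2 ^ 2 = 2 := Real.sq_sqrt (by norm_num)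
      rw [mul_pow, div_pow, one_pow, mul_pow, h2s]
      ring
    have hpos : 0 ≤ 1 / (α * Real.sqrt 2) * x := by positivity
    rw [dZ, show 1 / (α * Real.sqrt 2) * x
        = Real.sqrt ((1 / (α * Real.sqrt 2) * x) ^ 2) from (Real.sqrt_sq hpos).symm, hc1x]
    apply Real.sqrt_le_sqrt
    apply div_le_div_of_nonneg_right ?_ h2.le
    nlinarith
  · -- upper bound
    have hc2 : (0:ℝ) ≤ Real.sqrt ((2 + Real.sqrt (4 + 4 * α ^ 2)) / (2 * α ^ 2)) :=
      Real.sqrt_nonneg _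
    have hpos : 0 ≤ Real.sqrt ((2 + Real.sqrt (4 + 4 * α ^ 2)) / (2 * α ^ 2)) * x := by
      positivity
    have hc2x : (Real.sqrt ((2 + Real.sqrt (4 + 4 * α ^ 2)) / (2 * α ^ 2)) * x) ^ 2
        = ((2 + Real.sqrt (4 + 4 * α ^ 2)) * x ^ 2) / (2 * α ^ 2) := by
      rw [mul_pow, Real.sq_sqrt hargc2.le]
      ring
    rw [dZ, show Real.sqrt ((2 + Real.sqrt (4 + 4 * α ^ 2)) / (2 * α ^ 2)) * x
        = Real.sqrt ((Real.sqrt ((2 + Real.sqrt (4 + 4 * α ^ 2)) / (2 * α ^ 2)) * x) ^ 2)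
        from (Real.sqrt_sq hpos).symm, hc2x]
    apply Real.sqrt_le_sqrt
    apply div_le_div_of_nonneg_right ?_ h2.le
    have hA : (rho (x, y, z)) ^ 4 + 4 * α ^ 2 * z ^ 2 ≤ (4 + 4 * α ^ 2) * x ^ 4 := by
      rw [hrho4]
      nlinarith [sq_nonneg α, hy2, hz2, sq_nonneg (x^2), sq_nonneg y]
    have hsqA : Real.sqrt ((rho (x, y, z)) ^ 4 + 4 * α ^ 2 * z ^ 2)
        ≤ Real.sqrt (4 + 4 * α ^ 2) * x ^ 2 := by
      have : Real.sqrt ((4 + 4 * α ^ 2) * x ^ 4)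
          = Real.sqrt (4 + 4 * α ^ 2) * x ^ 2 := by
        rw [Real.sqrt_mul (by positivity), show x ^ 4 = (x ^ 2) ^ 2 by ring,
          Real.sqrt_sq (by positivity)]
      calc Real.sqrt ((rho (x, y, z)) ^ 4 + 4 * α ^ 2 * z ^ 2)
          ≤ Real.sqrt ((4 + 4 * α ^ 2) * x ^ 4) := Real.sqrt_le_sqrt hA
        _ = _ := this
    rw [hrho]
    nlinarith [hsqA, hy2]
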